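/- Let s ≥ 2 be an integer and let g : ℝ → ℝ satisfy: for every admissible digit sequence a, g(∑_{n=0}^∞ a n / s^{n+1}) = ∑_{n=0}^∞ (−1)^{n+1} a n / s^{n+1}. Then g is nowhere differentiable on [0,1): for every x ∈ [0,1), g is not differentiable at x. (Paper's Theorem 2 for the function f₊.) -/

import Mathlib

/-!
Write `x ∈ [0,1)` in base `s` and change only its `m`-th digit by `±1`. The new digit sequence
is still admissible, so `x` moves by `δₘ = ±s^-(m+1)` while `g x` moves by `(-1)^(m+1) δₘ`.
The difference quotients of `g` along `x + δₘ → x` therefore alternate between `1` and `-1`.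
-/

open Filter Topology Function

theorem Real.not_exists_forall_digits_eq_sub_one {b : ℕ} [NeZero b] (hb : 1 < b) {x : ℝ}
    (hx : x ∈ Set.Ico 0 1) : ¬ ∃ N, ∀ n ≥ N, (digits x b n : ℕ) = b - 1 := by
  rintro ⟨N, hN⟩
  have htail : (fun i ↦ digits x b (i + N)) = fun _ ↦ ⟨b - 1, Nat.sub_one_lt_of_lt hb⟩ :=
    funext fun i ↦ Fin.ext (hN _ (Nat.le_add_left N i))
  have hx_eq := ofDigits_eq_sum_add_ofDigits (digits x b) N
  rw [ofDigits_digits hb hx, htail, ofDigits_const_last_eq_one' hb, mul_one] at hx_eq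
  have hpow : (b : ℝ) ^ N ≠ 0 := by positivity
  have hfloor : (b : ℝ) ^ N * x = ⌊(b : ℝ) ^ N * x⌋₊ + 1 := by
    rw [← ofDigits_digits_sum_eq hx N]
    conv_lhs => rw [hx_eq]
    rw [mul_add, mul_inv_cancel₀ hpow]
  linarith [Nat.lt_floor_add_one ((b : ℝ) ^ N * x)]

theorem exists_digit_abs_sub_eq_one {s a : ℕ} (hs : 2 ≤ s) (ha : a ≤ s - 1) :
    ∃ d ≤ s - 1, |(d : ℝ) - a| = 1 := by
  rcases a with _ | a
  · exact ⟨1, by omega, by norm_num⟩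
  · exact ⟨a, by omega, by push_cast; norm_num⟩

theorem Real.not_tendsto_neg_one_pow (L : ℝ) :
    ¬ Tendsto (fun n : ℕ ↦ (-1 : ℝ) ^ n) atTop (𝓝 L) := by
  intro h
  have hshift : Tendsto (fun n : ℕ ↦ (-1 : ℝ) ^ (n + 1)) atTop (𝓝 L) :=
    (tendsto_add_atTop_iff_nat 1).2 h
  have hneg : Tendsto (fun n : ℕ ↦ (-1 : ℝ) ^ (n + 1)) atTop (𝓝 (-L)) := by
    simpa only [pow_succ, mul_neg_one] using h.neg
  have hL : L = 0 := by linarith [tendsto_nhds_unique hshift hneg]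
  have habs : Tendsto (fun _ : ℕ ↦ (1 : ℝ)) atTop (𝓝 |L|) := by simpa using h.abs
  simp [hL] at habs

theorem not_differentiableAt_of_slope_eq_neg_one_pow {f : ℝ → ℝ} {x : ℝ} {y : ℕ → ℝ}
    (hy : Tendsto y atTop (𝓝[≠] x)) (hslope : ∀ m, slope f x (y m) = (-1) ^ (m + 1)) :
    ¬ DifferentiableAt ℝ f x := by
  intro hf
  have h := (hasDerivAt_iff_tendsto_slope.1 hf.hasDerivAt).comp hy
  simp only [comp_def, hslope] at h
  exact Real.not_tendsto_neg_one_pow _ ((tendsto_add_atTop_iff_nat 1).1 h)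

theorem tendsto_add_div_pow_nhdsNE {s : ℝ} (hs : 1 < s) (x : ℝ) {c : ℕ → ℝ}
    (hc : ∀ m, |c m| = 1) : Tendsto (fun m ↦ x + c m / s ^ (m + 1)) atTop (𝓝[≠] x) := by
  have hs0 : 0 < s := by linarith
  have hδ : Tendsto (fun m ↦ c m / s ^ (m + 1)) atTop (𝓝 0) := by
    rw [tendsto_zero_iff_norm_tendsto_zero]
    simp only [norm_div, Real.norm_eq_abs, hc, abs_pow, abs_of_pos hs0, one_div, ← inv_pow]
    exact (tendsto_add_atTop_iff_nat 1).2
      (tendsto_pow_atTop_nhds_zero_of_lt_one (by positivity) (inv_lt_one_of_one_lt₀ hs))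
  refine tendsto_nhdsWithin_iff.2 ⟨by simpa using hδ.const_add x, Eventually.of_forall fun m ↦ ?_⟩
  have : c m ≠ 0 := fun h ↦ by simpa [h] using hc m
  simp [hs0.ne', this]

def IsNegaAdicMap (s : ℕ) (g : ℝ → ℝ) : Prop :=
  ∀ a : ℕ → ℕ, (∀ n, a n ≤ s - 1) → (¬ ∃ N, ∀ n ≥ N, a n = s - 1) →
    g (∑' n : ℕ, (a n : ℝ) / (s : ℝ) ^ (n + 1)) =
      ∑' n : ℕ, (-1 : ℝ) ^ (n + 1) * (a n : ℝ) / (s : ℝ) ^ (n + 1)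

namespace IsNegaAdicMap

variable {s : ℕ} {g : ℝ → ℝ} {a : ℕ → ℕ} {x : ℝ}

theorem hasSum (hg : IsNegaAdicMap s g) (ha : ∀ n, a n ≤ s - 1)
    (hadm : ¬ ∃ N, ∀ n ≥ N, a n = s - 1) (hx : HasSum (fun n ↦ (a n : ℝ) / s ^ (n + 1)) x) :
    HasSum (fun n ↦ (-1 : ℝ) ^ (n + 1) * a n / s ^ (n + 1)) (g x) := by
  rw [← hx.tsum_eq, hg a ha hadm]
  refine Summable.hasSum (Summable.of_norm (hx.summable.congr fun n ↦ ?_))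
  simp

theorem slope_update (hg : IsNegaAdicMap s g) (ha : ∀ n, a n ≤ s - 1)
    (hadm : ¬ ∃ N, ∀ n ≥ N, a n = s - 1) (hx : HasSum (fun n ↦ (a n : ℝ) / s ^ (n + 1)) x)
    {m d : ℕ} (hd : d ≤ s - 1) (hne : d ≠ a m) :
    slope g x (x + (d - a m) / s ^ (m + 1)) = (-1) ^ (m + 1) := by
  have hs : (s : ℝ) ≠ 0 := by have := ha m; norm_cast; omega
  have ha' : ∀ n, update a m d n ≤ s - 1 := by
    intro n
    rcases eq_or_ne n m with rfl | h
    · simpa using hd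
    · simpa [h] using ha n
  have hadm' : ¬ ∃ N, ∀ n ≥ N, update a m d n = s - 1 := by
    rintro ⟨N, hN⟩
    refine hadm ⟨max N (m + 1), fun n hn ↦ ?_⟩
    simpa [update_of_ne (show n ≠ m by omega)] using hN n (le_of_max_le_left hn)
  have hx' : HasSum (fun n ↦ (update a m d n : ℝ) / s ^ (n + 1))
      (x + (d - a m) / s ^ (m + 1)) := by
    rw [funext (apply_update (fun (n k : ℕ) ↦ (k : ℝ) / s ^ (n + 1)) a m d), sub_div, add_comm x]
    exact hx.update m _
  have hgx' : HasSum (fun n ↦ (-1 : ℝ) ^ (n + 1) * update a m d n / s ^ (n + 1))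
      (g x + (-1) ^ (m + 1) * ((d - a m) / s ^ (m + 1))) := by
    rw [funext (apply_update (fun (n k : ℕ) ↦ (-1 : ℝ) ^ (n + 1) * k / s ^ (n + 1)) a m d),
      ← mul_div_assoc, mul_sub, sub_div, add_comm (g x)]
    exact (hg.hasSum ha hadm hx).update m _
  have hδ : ((d : ℝ) - a m) / s ^ (m + 1) ≠ 0 :=
    div_ne_zero (sub_ne_zero.2 (by exact_mod_cast hne)) (pow_ne_zero _ hs)
  rw [slope_def_field, (hg.hasSum ha' hadm' hx').unique hgx', add_sub_cancel_left,
    add_sub_cancel_left, mul_div_cancel_right₀ _ hδ]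

end IsNegaAdicMap

theorem stmt_15 (s : ℕ) (hs : 2 ≤ s) (g : ℝ → ℝ)
    (hg : ∀ a : ℕ → ℕ, (∀ n, a n ≤ s - 1) → (¬ ∃ N, ∀ n ≥ N, a n = s - 1) →
      g (∑' n : ℕ, (a n : ℝ) / (s : ℝ) ^ (n + 1)) =
        ∑' n : ℕ, (-1 : ℝ) ^ (n + 1) * (a n : ℝ) / (s : ℝ) ^ (n + 1)) :
    ∀ x ∈ Set.Ico (0 : ℝ) 1, ¬ DifferentiableAt ℝ g x := by
  intro x hx
  have : NeZero s := ⟨by omega⟩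
  set a : ℕ → ℕ := fun n ↦ Real.digits x s n
  have ha : ∀ n, a n ≤ s - 1 := fun n ↦ Nat.le_sub_one_of_lt (Real.digits x s n).isLt
  have hx_sum : HasSum (fun n ↦ (a n : ℝ) / s ^ (n + 1)) x := by
    have h := Real.hasSum_ofDigitsTerm_digits x hs hx
    unfold Real.ofDigitsTerm at h
    simpa only [div_eq_mul_inv] using h
  choose d hd hd_dist using fun m ↦ exists_digit_abs_sub_eq_one hs (ha m)
  refine not_differentiableAt_of_slope_eq_neg_one_pow
    (tendsto_add_div_pow_nhdsNE (Nat.one_lt_cast.2 hs) x hd_dist) fun m ↦ ?_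
  refine IsNegaAdicMap.slope_update hg ha (Real.not_exists_forall_digits_eq_sub_one hs hx) hx_sum
    (hd m) fun h ↦ by simpa [h] using hd_dist m
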